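/- For λ ≥ 1 let N = ⌊(λ−1)/6⌋, let E_λ = ⋃_{n=−N}^{N} [3n − 1/2, 3n + 1/2] ⊆ ℝ, and let F_λ = 1_{E_λ} ⋆ 1_{E_λ} be the convolution of the indicator function of E_λ with itself. Then: (i) the Fourier transform F̂_λ satisfies F̂_λ(ξ) ≥ 0 for all ξ ∈ ℝ; (ii) F_λ(x) = 0 whenever 1 < |x| < 2 or |x| > λ; (iii) F_λ(0)/F̂_λ(0) = 1/(2N+1); and consequently (iv) lim_{λ→∞} (2+λ)·F_λ(0)/F̂_λ(0) = 3. -/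

import Mathlib

/-!
Since `F_λ = 1_E ⋆ 1_E`, its Fourier transform is `(1̂_E)²`, and `1̂_E` is real because `1_E` is
real and even; hence `F̂_λ ≥ 0`. The function `F_λ` is supported in `E + E`, and adding two points
within `1/2` of `3m` and `3n` gives a point within `1` of `3(m + n)` with `|m + n| ≤ 2N`: so
`E + E` avoids `1 < |x| < 2` and `|x| > 6N + 1`. Finally `F_λ(0) = |E| = 2N + 1` and
`F̂_λ(0) = |E|²`, while `2N + 1 ~ λ / 3`.
-/

open MeasureTheory Filter Set FourierTransform

noncomputable section

/-- `E_λ = ⋃_{n=-N}^{N} [3n - 1/2, 3n + 1/2]` with `N = ⌊(λ-1)/6⌋`. -/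
def Eset (lam : ℝ) : Set ℝ :=
  ⋃ n ∈ Finset.Icc (-⌊(lam - 1) / 6⌋) ⌊(lam - 1) / 6⌋,
    Icc ((3 * n : ℝ) - 1 / 2) ((3 * n : ℝ) + 1 / 2)

/-- `F_λ = 1_{E_λ} ⋆ 1_{E_λ}`. -/
def Fconv (lam : ℝ) (x : ℝ) : ℝ :=
  ∫ y : ℝ, (Eset lam).indicator (fun _ => (1 : ℝ)) y *
    (Eset lam).indicator (fun _ => (1 : ℝ)) (x - y)

open Topology Convolution ComplexConjugate Pointwise

section FourierOfReal

variable {V : Type*} [NormedAddCommGroup V] [InnerProductSpace ℝ V] [FiniteDimensional ℝ V]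
  [MeasurableSpace V] [BorelSpace V]

theorem Real.conj_fourier_ofReal (f : V → ℝ) (w : V) :
    conj (𝓕 (fun v ↦ (f v : ℂ)) w) = 𝓕⁻ (fun v ↦ (f v : ℂ)) w := by
  simp_rw [Real.fourier_eq, Real.fourierInv_eq, ← integral_conj, Circle.smul_def, smul_eq_mul,
    map_mul, Complex.conj_ofReal, ← Circle.coe_inv_eq_conj, AddChar.map_neg_eq_inv, inv_inv]

theorem Real.fourier_ofReal_im_eq_zero_of_even {f : V → ℝ} (hf : f.Even) (w : V) :
    (𝓕 (fun v ↦ (f v : ℂ)) w).im = 0 := by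
  rw [← Complex.conj_eq_iff_im, Real.conj_fourier_ofReal, Real.fourierInv_eq_fourier_comp_neg]
  simp only [hf _]

theorem Real.fourier_ofReal_convolution {f g : V → ℝ} (hf : Integrable f) (hg : Integrable g)
    (ξ : V) :
    𝓕 (fun x ↦ ((∫ y, f y * g (x - y) : ℝ) : ℂ)) ξ =
      𝓕 (fun x ↦ (f x : ℂ)) ξ * 𝓕 (fun x ↦ (g x : ℂ)) ξ := by
  have : (fun x ↦ ((∫ y, f y * g (x - y) : ℝ) : ℂ)) =
      (fun x ↦ (f x : ℂ)) ⋆[ContinuousLinearMap.mul ℂ ℂ] (fun x ↦ (g x : ℂ)) := by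
    ext x
    rw [convolution_def, ← integral_complex_ofReal]
    simp
  rw [this]
  exact Real.fourier_mul_convolution_eq hf.ofReal hg.ofReal ξ

theorem Real.fourier_ofReal_convolution_self_of_even {f : V → ℝ} (hf : Integrable f)
    (he : f.Even) (ξ : V) :
    𝓕 (fun x ↦ ((∫ y, f y * f (x - y) : ℝ) : ℂ)) ξ = ((𝓕 (fun x ↦ (f x : ℂ)) ξ).re ^ 2 : ℝ) := by
  rw [Real.fourier_ofReal_convolution hf hf, ← sq]
  conv_lhs => rw [← Complex.re_add_im (𝓕 (fun x ↦ (f x : ℂ)) ξ),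
    Real.fourier_ofReal_im_eq_zero_of_even he]
  simp

end FourierOfReal

namespace Eset

variable {lam : ℝ}

theorem mem_iff {x : ℝ} :
    x ∈ Eset lam ↔ ∃ n : ℤ, |n| ≤ ⌊(lam - 1) / 6⌋ ∧ |x - 3 * n| ≤ 1 / 2 := by
  simp only [Eset, mem_iUnion, Finset.mem_Icc, mem_Icc, exists_prop, abs_le]
  refine exists_congr fun n ↦ and_congr_right fun _ ↦ ?_
  constructor <;> rintro ⟨h₁, h₂⟩ <;> constructor <;> linarith

theorem neg_mem_iff {x : ℝ} : -x ∈ Eset lam ↔ x ∈ Eset lam := by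
  suffices ∀ x, x ∈ Eset lam → -x ∈ Eset lam from ⟨fun h ↦ neg_neg x ▸ this _ h, this x⟩
  intro x hx
  obtain ⟨n, hn, hx⟩ := mem_iff.mp hx
  refine mem_iff.mpr ⟨-n, by rwa [abs_neg], ?_⟩
  rwa [show -x - 3 * ((-n : ℤ) : ℝ) = -(x - 3 * n) by push_cast; ring, abs_neg]

theorem measurableSet (lam : ℝ) : MeasurableSet (Eset lam) :=
  .biUnion (Finset.Icc _ _).countable_toSet fun _ _ ↦ measurableSet_Icc

theorem volume_eq (lam : ℝ) :
    volume (Eset lam) = (Finset.Icc (-⌊(lam - 1) / 6⌋) ⌊(lam - 1) / 6⌋).card := by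
  rw [Eset, measure_biUnion_finset _ fun _ _ ↦ measurableSet_Icc]
  · norm_num [Real.volume_Icc]
  · intro m _ n _ hmn
    rw [Function.onFun, Set.disjoint_left]
    intro a ha ha'
    simp only [mem_Icc] at ha ha'
    rcases lt_or_gt_of_ne hmn with h | h
    · have : (m : ℝ) + 1 ≤ n := by exact_mod_cast h
      linarith
    · have : (n : ℝ) + 1 ≤ m := by exact_mod_cast h
      linarith

theorem volume_real_eq (h : 1 ≤ lam) :
    volume.real (Eset lam) = 2 * (⌊(lam - 1) / 6⌋ : ℝ) + 1 := by
  have hN : 0 ≤ ⌊(lam - 1) / 6⌋ := Int.floor_nonneg.mpr (by linarith)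
  rw [measureReal_def, volume_eq, Int.card_Icc, ENNReal.toReal_natCast, ← Int.cast_natCast,
    Int.toNat_of_nonneg (by omega)]
  push_cast
  ring

theorem volume_lt_top (lam : ℝ) : volume (Eset lam) < ⊤ := by
  rw [volume_eq]
  exact ENNReal.natCast_lt_top _

theorem integrable_indicator (lam : ℝ) : Integrable ((Eset lam).indicator (1 : ℝ → ℝ)) :=
  (integrable_indicator_iff (measurableSet lam)).mpr
    (integrableOn_const (volume_lt_top lam).ne)

theorem integral_indicator_one (h : 1 ≤ lam) :
    ∫ x, (Eset lam).indicator (1 : ℝ → ℝ) x = 2 * (⌊(lam - 1) / 6⌋ : ℝ) + 1 := by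
  rw [MeasureTheory.integral_indicator_one (measurableSet lam), volume_real_eq h]

theorem re_fourier_indicator_zero (h : 1 ≤ lam) :
    (𝓕 (fun x ↦ (((Eset lam).indicator (1 : ℝ → ℝ) x : ℝ) : ℂ)) 0).re =
      2 * (⌊(lam - 1) / 6⌋ : ℝ) + 1 := by
  simp only [Real.fourier_real_eq, mul_zero, neg_zero, AddChar.map_zero_eq_one, one_smul,
    integral_complex_ofReal, Complex.ofReal_re, integral_indicator_one h]

theorem even_indicator (lam : ℝ) : ((Eset lam).indicator (1 : ℝ → ℝ)).Even := fun x ↦ by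
  by_cases hx : x ∈ Eset lam <;> simp [hx, neg_mem_iff]

theorem abs_le_one_or_two_le_abs_of_mem_add {x : ℝ} (hx : x ∈ Eset lam + Eset lam) :
    (|x| ≤ 1 ∨ 2 ≤ |x|) ∧ |x| ≤ lam := by
  obtain ⟨k, hk, hx⟩ : ∃ k : ℤ, |k| ≤ 2 * ⌊(lam - 1) / 6⌋ ∧ |x - 3 * k| ≤ 1 := by
    obtain ⟨y, hy, z, hz, rfl⟩ := hx
    obtain ⟨m, hm, hy⟩ := mem_iff.mp hy
    obtain ⟨n, hn, hz⟩ := mem_iff.mp hz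
    refine ⟨m + n, (abs_add_le m n).trans (by omega), ?_⟩
    calc |y + z - 3 * ((m + n : ℤ) : ℝ)| = |(y - 3 * m) + (z - 3 * n)| := by push_cast; ring_nf
      _ ≤ 1 := (abs_add_le _ _).trans (by linarith)
  have hk : |(k : ℝ)| ≤ 2 * ⌊(lam - 1) / 6⌋ := by
    rw [← Int.cast_abs]
    exact_mod_cast hk
  have hN : (⌊(lam - 1) / 6⌋ : ℝ) ≤ (lam - 1) / 6 := Int.floor_le _
  have hx₁ := abs_sub_abs_le_abs_sub x (3 * k)
  have hx₂ := abs_sub_abs_le_abs_sub (3 * (k : ℝ)) x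
  rw [abs_sub_comm] at hx₂
  rw [abs_mul, abs_of_pos (by norm_num : (0 : ℝ) < 3)] at hx₁ hx₂
  refine ⟨?_, by linarith⟩
  rcases eq_or_ne k 0 with rfl | hk₀
  · simpa using Or.inl hx
  · have : (1 : ℝ) ≤ |(k : ℝ)| := by
      rw [← Int.cast_abs]
      exact_mod_cast Int.one_le_abs hk₀
    right
    linarith

end Eset

theorem Fconv.support_subset (lam : ℝ) :
    Function.support (Fconv lam) ⊆ Eset lam + Eset lam := by
  have h := support_convolution_subset (ContinuousLinearMap.mul ℝ ℝ) (μ := volume)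
    (f := (Eset lam).indicator (1 : ℝ → ℝ)) (g := (Eset lam).indicator 1)
  rw [Set.support_indicator, Function.support_one, Set.inter_univ] at h
  exact h

theorem Fconv.apply_zero {lam : ℝ} (h : 1 ≤ lam) :
    Fconv lam 0 = 2 * (⌊(lam - 1) / 6⌋ : ℝ) + 1 := by
  have hsq : ∀ y, (Eset lam).indicator (1 : ℝ → ℝ) y * (Eset lam).indicator 1 (0 - y) =
      (Eset lam).indicator 1 y := fun y ↦ by
    rw [zero_sub, Eset.even_indicator lam y]
    by_cases hy : y ∈ Eset lam <;> simp [hy]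
  rw [Fconv]
  simp_rw [← Pi.one_def, hsq]
  exact Eset.integral_indicator_one h

theorem tendsto_add_div_two_mul_floor_add_one :
    Tendsto (fun lam : ℝ ↦ (2 + lam) / (2 * (⌊(lam - 1) / 6⌋ : ℝ) + 1)) atTop (𝓝 3) := by
  have hupper : Tendsto (fun lam : ℝ ↦ 3 + 18 / (lam - 4)) atTop (𝓝 3) := by
    simpa [sub_eq_add_neg] using (tendsto_const_nhds (x := (3 : ℝ))).add
      (tendsto_const_nhds.div_atTop (tendsto_atTop_add_const_right _ (-4 : ℝ) tendsto_id))
  refine tendsto_of_tendsto_of_tendsto_of_le_of_le' tendsto_const_nhds hupper ?_ ?_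
  · filter_upwards [eventually_ge_atTop 1] with lam h
    have hN : (⌊(lam - 1) / 6⌋ : ℝ) ≤ (lam - 1) / 6 := Int.floor_le _
    have hN₀ : (0 : ℝ) ≤ ⌊(lam - 1) / 6⌋ := by exact_mod_cast Int.floor_nonneg.mpr (by linarith)
    rw [le_div_iff₀ (by linarith)]
    linarith
  · filter_upwards [eventually_gt_atTop 4] with lam h
    have hN : (lam - 1) / 6 - 1 < (⌊(lam - 1) / 6⌋ : ℝ) := Int.sub_one_lt_floor _
    calc (2 + lam) / (2 * (⌊(lam - 1) / 6⌋ : ℝ) + 1)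
        ≤ (2 + lam) / ((lam - 4) / 3) :=
          div_le_div_of_nonneg_left (by linarith) (by linarith) (by linarith)
      _ = 3 + 18 / (lam - 4) := by
        field_simp [show lam - 4 ≠ 0 by linarith]
        ring

/-- Sharpness of the kissing-number linear program in dimension `1`:
for `λ ≥ 1` and `N = ⌊(λ-1)/6⌋`, the function `F_λ = 1_{E_λ} ⋆ 1_{E_λ}` has
nonnegative Fourier transform, vanishes for `1 < |x| < 2` and for `|x| > λ`,
satisfies `F_λ(0)/F̂_λ(0) = 1/(2N+1)`, and `(2+λ)F_λ(0)/F̂_λ(0) → 3` as `λ → ∞`. -/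
theorem fejer_trick_dim1 :
    (∀ lam : ℝ, 1 ≤ lam →
      (∀ ξ : ℝ, (𝓕 (fun x : ℝ => (Fconv lam x : ℂ)) ξ).im = 0 ∧
        0 ≤ (𝓕 (fun x : ℝ => (Fconv lam x : ℂ)) ξ).re) ∧
      (∀ x : ℝ, (1 < |x| ∧ |x| < 2) ∨ lam < |x| → Fconv lam x = 0) ∧
      Fconv lam 0 / (𝓕 (fun x : ℝ => (Fconv lam x : ℂ)) 0).re =
        1 / (2 * (⌊(lam - 1) / 6⌋ : ℝ) + 1)) ∧
    Tendsto
      (fun lam : ℝ =>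
        (2 + lam) * Fconv lam 0 / (𝓕 (fun x : ℝ => (Fconv lam x : ℂ)) 0).re)
      atTop (nhds 3) := by
  have hF : ∀ lam ξ, 𝓕 (fun x ↦ (Fconv lam x : ℂ)) ξ =
      ((𝓕 (fun x ↦ (((Eset lam).indicator (1 : ℝ → ℝ) x : ℝ) : ℂ)) ξ).re ^ 2 : ℝ) := fun lam ↦
    Real.fourier_ofReal_convolution_self_of_even (Eset.integrable_indicator lam)
      (Eset.even_indicator lam)
  have hratio : ∀ lam, 1 ≤ lam → Fconv lam 0 / (𝓕 (fun x ↦ (Fconv lam x : ℂ)) 0).re =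
      1 / (2 * (⌊(lam - 1) / 6⌋ : ℝ) + 1) := by
    intro lam h
    have hN₀ : (0 : ℝ) ≤ ⌊(lam - 1) / 6⌋ := by exact_mod_cast Int.floor_nonneg.mpr (by linarith)
    rw [hF, Complex.ofReal_re, Eset.re_fourier_indicator_zero h, Fconv.apply_zero h]
    field_simp
  refine ⟨fun lam h ↦ ⟨fun ξ ↦ ?_, fun x hx ↦ ?_, hratio lam h⟩, ?_⟩
  · rw [hF, Complex.ofReal_im, Complex.ofReal_re]
    exact ⟨rfl, sq_nonneg _⟩
  · refine Function.notMem_support.mp fun hx₀ ↦ ?_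
    have := Eset.abs_le_one_or_two_le_abs_of_mem_add (Fconv.support_subset lam hx₀)
    rcases hx with hx | hx <;> rcases this with ⟨h₁ | h₁, h₂⟩ <;> linarith
  · refine tendsto_add_div_two_mul_floor_add_one.congr' ?_
    filter_upwards [eventually_ge_atTop 1] with lam h
    rw [mul_div_assoc, hratio lam h, mul_one_div]
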